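/- Let (π, t) be a representation of a C*-correspondence X over A on a C*-algebra B. Then: (i) ker π is a positively invariant ideal of A; (ii) ker t = X·(ker π); (iii) for a ∈ A with φ_X(a) ∈ K(X), one has π(a) = ψ_t(φ_X(a)) if and only if π(a) ∈ ψ_t(K(X)). -/

import Mathlib

noncomputable section

/-- A (right) Hilbert C*-module over a C*-algebra `A`. -/
class HilbertModule (A : Type*) [CStarAlgebra A] (X : Type*)
    [NormedAddCommGroup X] [NormedSpace ℂ X] : Type _ where
  rsmul : X → A → X
  inner : X → X → A
  rsmul_add_left : ∀ (x y : X) (a : A), rsmul (x + y) a = rsmul x a + rsmul y a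
  rsmul_add_right : ∀ (x : X) (a b : A), rsmul x (a + b) = rsmul x a + rsmul x b
  rsmul_rsmul : ∀ (x : X) (a b : A), rsmul (rsmul x a) b = rsmul x (a * b)
  rsmul_csmul_left : ∀ (c : ℂ) (x : X) (a : A), rsmul (c • x) a = c • rsmul x a
  rsmul_csmul_right : ∀ (c : ℂ) (x : X) (a : A), rsmul x (c • a) = c • rsmul x a
  inner_add_left : ∀ (x y z : X), inner (x + y) z = inner x z + inner y z
  inner_add_right : ∀ (x y z : X), inner x (y + z) = inner x y + inner x z
  inner_csmul_right : ∀ (c : ℂ) (x y : X), inner x (c • y) = c • inner x y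
  star_inner : ∀ (x y : X), star (inner x y) = inner y x
  inner_rsmul_right : ∀ (x y : X) (a : A), inner x (rsmul y a) = inner x y * a
  inner_self_isPositive : ∀ x : X, ∃ b : A, inner x x = star b * b
  norm_sq_inner : ∀ x : X, ‖x‖ ^ 2 = ‖inner x x‖
  norm_inner_le : ∀ x y : X, ‖inner x y‖ ≤ ‖x‖ * ‖y‖
  norm_rsmul_le : ∀ (x : X) (a : A), ‖rsmul x a‖ ≤ ‖x‖ * ‖a‖

namespace HilbertModule

variable {A : Type*} [CStarAlgebra A] {X : Type*}
  [NormedAddCommGroup X] [NormedSpace ℂ X] [HilbertModule A X]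

/-- The closed submodule `X·S` generated by products `ξ·a`, `a ∈ S`. -/
def idealSub (X : Type*) {A : Type*} [CStarAlgebra A] [NormedAddCommGroup X]
    [NormedSpace ℂ X] [HilbertModule A X] (S : Set A) : Set X :=
  closure (Submodule.span ℂ {x : X | ∃ (ξ : X) (a : A), a ∈ S ∧ x = rsmul ξ a} : Set X)

/-- The rank-one ("theta") operator `ζ ↦ ξ⟨η,ζ⟩`. -/
def rankOne (A : Type*) {X : Type*} [CStarAlgebra A] [NormedAddCommGroup X]
    [NormedSpace ℂ X] [HilbertModule A X] (ξ η : X) : X →L[ℂ] X :=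
  LinearMap.mkContinuous
    { toFun := fun ζ => rsmul ξ (inner (A := A) η ζ)
      map_add' := fun x y => by
        show rsmul ξ (inner (A := A) η (x + y)) = _
        rw [inner_add_right, rsmul_add_right]
      map_smul' := fun c x => by
        show rsmul ξ (inner (A := A) η (c • x)) = _
        simp only [RingHom.id_apply]
        rw [inner_csmul_right, rsmul_csmul_right] }
    (‖ξ‖ * ‖η‖)
    (fun ζ => by
      calc ‖rsmul ξ (inner (A := A) η ζ)‖ ≤ ‖ξ‖ * ‖inner (A := A) η ζ‖ :=
            norm_rsmul_le _ _
        _ ≤ ‖ξ‖ * (‖η‖ * ‖ζ‖) :=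
            mul_le_mul_of_nonneg_left (norm_inner_le _ _) (norm_nonneg _)
        _ = ‖ξ‖ * ‖η‖ * ‖ζ‖ := (mul_assoc _ _ _).symm)

/-- The set of "compact" operators `K(X)`: the closed linear span of rank-one operators. -/
def compacts (A X : Type*) [CStarAlgebra A] [NormedAddCommGroup X]
    [NormedSpace ℂ X] [HilbertModule A X] : Set (X →L[ℂ] X) :=
  closure (Submodule.span ℂ {T : X →L[ℂ] X | ∃ ξ η : X, T = rankOne A ξ η} : Set (X →L[ℂ] X))

/-- `K(X·I)`, viewed inside the operators on `X`: the closed span of rank-one operators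
with both legs in the subset `S`. -/
def compactsOn (A : Type*) {X : Type*} [CStarAlgebra A] [NormedAddCommGroup X]
    [NormedSpace ℂ X] [HilbertModule A X] (S : Set X) : Set (X →L[ℂ] X) :=
  closure (Submodule.span ℂ
    {T : X →L[ℂ] X | ∃ ξ ∈ S, ∃ η ∈ S, T = rankOne A ξ η} : Set (X →L[ℂ] X))

/-- An operator is adjointable if it has an adjoint with respect to the `A`-valued
inner product. -/
def IsAdjointable (A : Type*) {X : Type*} [CStarAlgebra A] [NormedAddCommGroup X]
    [NormedSpace ℂ X] [HilbertModule A X] (S : X →L[ℂ] X) : Prop :=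
  ∃ T : X →L[ℂ] X, ∀ x y : X, inner (A := A) (S x) y = inner (A := A) x (T y)

end HilbertModule

/-- A C*-correspondence over `A`: a Hilbert `A`-module with a left action of `A`
by adjointable operators. -/
class Correspondence (A : Type*) [CStarAlgebra A] (X : Type*)
    [NormedAddCommGroup X] [NormedSpace ℂ X] extends HilbertModule A X where
  lsmul : A → X → X
  lsmul_add_left : ∀ (a b : A) (x : X), lsmul (a + b) x = lsmul a x + lsmul b x
  lsmul_add_right : ∀ (a : A) (x y : X), lsmul a (x + y) = lsmul a x + lsmul a y
  lsmul_mul : ∀ (a b : A) (x : X), lsmul (a * b) x = lsmul a (lsmul b x)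
  lsmul_csmul_left : ∀ (c : ℂ) (a : A) (x : X), lsmul (c • a) x = c • lsmul a x
  lsmul_csmul_right : ∀ (c : ℂ) (a : A) (x : X), lsmul a (c • x) = c • lsmul a x
  inner_lsmul_left : ∀ (a : A) (x y : X), inner (lsmul a x) y = inner x (lsmul (star a) y)
  lsmul_rsmul : ∀ (a : A) (x : X) (b : A), lsmul a (rsmul x b) = rsmul (lsmul a x) b
  norm_lsmul_le : ∀ (a : A) (x : X), ‖lsmul a x‖ ≤ ‖a‖ * ‖x‖

namespace Correspondence

open HilbertModule

variable {A : Type*} [CStarAlgebra A] {X : Type*}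
  [NormedAddCommGroup X] [NormedSpace ℂ X] [Correspondence A X]

/-- The left action `φ_X(a)` as a continuous linear operator on `X`. -/
def lact (A : Type*) {X : Type*} [CStarAlgebra A] [NormedAddCommGroup X]
    [NormedSpace ℂ X] [Correspondence A X] (a : A) : X →L[ℂ] X :=
  LinearMap.mkContinuous
    { toFun := lsmul a
      map_add' := lsmul_add_right a
      map_smul' := fun c x => by
        show lsmul a (c • x) = _
        simp only [RingHom.id_apply]; rw [lsmul_csmul_right] }
    ‖a‖ (norm_lsmul_le a)

/-- The ideal `X(S)`: closed span of `{⟨η, φ_X(a)ξ⟩ : a ∈ S}`. -/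
def corrApply (X : Type*) {A : Type*} [CStarAlgebra A] [NormedAddCommGroup X]
    [NormedSpace ℂ X] [Correspondence A X] (S : Set A) : Set A :=
  closure (Submodule.span ℂ
    {b : A | ∃ a ∈ S, ∃ ξ η : X, b = inner (A := A) η (lsmul a ξ)} : Set A)

/-- The ideal `X⁻¹(S) = {a : ⟨η, φ_X(a)ξ⟩ ∈ S for all ξ, η}`. -/
def corrInv (X : Type*) {A : Type*} [CStarAlgebra A] [NormedAddCommGroup X]
    [NormedSpace ℂ X] [Correspondence A X] (S : Set A) : Set A :=
  {a : A | ∀ ξ η : X, inner (A := A) η (lsmul a ξ) ∈ S}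

/-- The kernel of the left action `φ_X`. -/
def kerLact (X : Type*) {A : Type*} [CStarAlgebra A] [NormedAddCommGroup X]
    [NormedSpace ℂ X] [Correspondence A X] : Set A :=
  {a : A | ∀ ξ : X, lsmul a ξ = 0}

/-- Katsura's ideal `J_X = φ_X⁻¹(K(X)) ∩ (ker φ_X)^⊥`. -/
def JX (X : Type*) {A : Type*} [CStarAlgebra A] [NormedAddCommGroup X]
    [NormedSpace ℂ X] [Correspondence A X] : Set A :=
  {a : A | lact A (X := X) a ∈ compacts A X ∧ ∀ b ∈ kerLact X, a * b = 0}

end Correspondence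

open HilbertModule Correspondence

/-- Data presenting a Hilbert `B`-module `Y` as the quotient `X_I = X/XI` of a Hilbert
`A`-module `X` by a closed two-sided ideal `I` of `A` (with `B` playing the role of `A/I`). -/
structure QuotientData (A B : Type*) [CStarAlgebra A] [CStarAlgebra B]
    (I : TwoSidedIdeal A)
    (X Y : Type*) [NormedAddCommGroup X] [NormedSpace ℂ X] [HilbertModule A X]
    [NormedAddCommGroup Y] [NormedSpace ℂ Y] [HilbertModule B Y] : Type _ where
  π : A →⋆ₐ[ℂ] B
  π_surjective : Function.Surjective π
  π_ker : ∀ a : A, π a = 0 ↔ a ∈ I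
  q : X →ₗ[ℂ] Y
  q_surjective : Function.Surjective q
  q_ker : ∀ ξ : X, q ξ = 0 ↔ ξ ∈ idealSub X (I : Set A)
  q_inner : ∀ ξ ζ : X, inner (A := B) (q ξ) (q ζ) = π (inner (A := A) ξ ζ)
  q_rsmul : ∀ (ξ : X) (a : A), q (rsmul ξ a) = rsmul (q ξ) (π a)


/-- Quotient data compatible with the left actions (presenting `X_I` as a
C*-correspondence over `A/I`). -/
structure CorrQuotientData (A B : Type*) [CStarAlgebra A] [CStarAlgebra B]
    (I : TwoSidedIdeal A)
    (X Y : Type*) [NormedAddCommGroup X] [NormedSpace ℂ X] [Correspondence A X]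
    [NormedAddCommGroup Y] [NormedSpace ℂ Y] [Correspondence B Y]
    extends QuotientData A B I X Y where
  q_lsmul : ∀ (a : A) (ξ : X), q (lsmul a ξ) = lsmul (π a) (q ξ)

/-- Katsura's ideal `J(I) = {a : [φ_X(a)]_I ∈ K(X_I), a·X⁻¹(I) ⊂ I}`, expressed via
quotient data presenting `X_I`. -/
def JofI {A B : Type*} [CStarAlgebra A] [CStarAlgebra B] {I : TwoSidedIdeal A}
    {X Y : Type*} [NormedAddCommGroup X] [NormedSpace ℂ X] [Correspondence A X]
    [NormedAddCommGroup Y] [NormedSpace ℂ Y] [HilbertModule B Y]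
    (D : QuotientData A B I X Y) : Set A :=
  {a : A | (∃ T ∈ compacts B Y, ∀ ξ : X, T (D.q ξ) = D.q (lsmul a ξ)) ∧
    ∀ b ∈ corrInv X (I : Set A), a * b ∈ I}

/-- A Hilbert `A`-bimodule: a C*-correspondence together with a left inner product
satisfying `φ_X(⟪ξ,η⟫) = θ_{ξ,η}`. -/
class HilbertBimodule (A : Type*) [CStarAlgebra A] (X : Type*)
    [NormedAddCommGroup X] [NormedSpace ℂ X] extends Correspondence A X where
  linner : X → X → A
  lsmul_linner : ∀ ξ η ζ : X, lsmul (linner ξ η) ζ = rsmul ξ (inner η ζ)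

/-- The closed subspace `φ_X(S)X`: closed span of `{φ_X(a)ξ : a ∈ S}`. -/
def lsmulSet (X : Type*) {A : Type*} [CStarAlgebra A] [NormedAddCommGroup X]
    [NormedSpace ℂ X] [Correspondence A X] (S : Set A) : Set X :=
  closure (Submodule.span ℂ
    {x : X | ∃ a ∈ S, ∃ ξ : X, x = Correspondence.lsmul a ξ} : Set X)

/-!
Both (i) and the inclusion `X·ker π ⊆ ker t` follow from `t(ξ)* t(η) = π⟨ξ,η⟩` and
`t(ξa) = t(ξ)π(a)`. Conversely, if `t(ξ) = 0` then `h = ⟨ξ,ξ⟩ ∈ ker π`, and `ξ` is the limit of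
`ξ·u` with `u = h²(h² + δ²)⁻¹ ∈ h·A`, because `‖ξ - ξ·u‖² = ‖(1 - u) h (1 - u)‖ ≤ δ`.
For (iii), if `π(a) = ψ_t(T)` then `c = ψ_t(T - φ_X(a))` annihilates `t(X)`, since
`ψ_t(S) t(ξ) = t(Sξ)`; as `c` lies in the closed span of the `t(ξ) t(η)*`, a self-adjoint set,
`c c* = 0`, so `c = 0`.
-/

open Set Submodule

section ClosedSpan

variable {𝕜 E F : Type*} [Semiring 𝕜] [AddCommMonoid E] [Module 𝕜 E] [TopologicalSpace E]
  [AddCommMonoid F] [Module 𝕜 F] [TopologicalSpace F]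

theorem mapsTo_closure_span {f : E → F} {R : Set E} {p : Submodule 𝕜 F}
    (hp : IsClosed (p : Set F))
    (hadd : ∀ x ∈ span 𝕜 R, ∀ y ∈ span 𝕜 R, f (x + y) = f x + f y)
    (hsmul : ∀ (c : 𝕜), ∀ x ∈ span 𝕜 R, f (c • x) = c • f x)
    (hcont : ContinuousOn f (closure (span 𝕜 R : Set E)))
    (hR : MapsTo f R p) : MapsTo f (closure (span 𝕜 R : Set E)) p := by
  have hspan : MapsTo f (span 𝕜 R) p := by
    intro x hx
    induction hx using Submodule.span_induction with
    | mem r hr => exact hR hr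
    | zero => rw [show f 0 = 0 by simpa using hsmul 0 0 (zero_mem _)]; exact zero_mem p
    | add x y hx hy ihx ihy => rw [hadd x hx y hy]; exact add_mem ihx ihy
    | smul c x hx ih => rw [hsmul c x hx]; exact p.smul_mem c ih
  simpa only [hp.closure_eq] using hspan.closure_of_continuousOn hcont

end ClosedSpan

theorem star_mem_closure_span {𝕜 B : Type*} [CommSemiring 𝕜] [StarRing 𝕜] [AddCommMonoid B]
    [StarAddMonoid B] [Module 𝕜 B] [StarModule 𝕜 B] [TopologicalSpace B] [ContinuousStar B]
    {G : Set B} (hG : ∀ g ∈ G, star g ∈ G) {x : B} (hx : x ∈ closure (span 𝕜 G : Set B)) :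
    star x ∈ closure (span 𝕜 G : Set B) := by
  refine map_mem_closure continuous_star hx fun y hy => ?_
  induction hy using Submodule.span_induction with
  | mem g hg => exact subset_span (hG g hg)
  | zero => simp
  | add y z _ _ hy hz => rw [star_add]; exact add_mem hy hz
  | smul c y _ hy => rw [star_smul]; exact smul_mem _ _ hy

theorem eq_zero_of_mem_closure_span_of_mul_eq_zero {B : Type*} [NonUnitalCStarAlgebra B]
    {G : Set B} (hG : ∀ g ∈ G, star g ∈ G) {c : B} (hc : c ∈ closure (span ℂ G : Set B))
    (hcG : ∀ g ∈ G, c * g = 0) : c = 0 := by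
  have hann : MapsTo (c * ·) (closure (span ℂ G : Set B)) (⊥ : Submodule ℂ B) :=
    mapsTo_closure_span (by simp) (fun x _ y _ => mul_add c x y)
      (fun r x _ => mul_smul_comm r c x) (continuous_const_mul c).continuousOn
      (fun g hg => hcG g hg)
  have : c * star c = 0 := hann (star_mem_closure_span hG hc)
  exact (CStarRing.mul_star_self_eq_zero_iff c).mp this

theorem abs_one_sub_mul_mul_le {δ : ℝ} (hδ : 0 < δ) (x : ℝ) :
    |(1 - x * (x * (x ^ 2 + δ ^ 2)⁻¹)) * x * (1 - x * (x * (x ^ 2 + δ ^ 2)⁻¹))| ≤ δ := by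
  have hD : 0 < x ^ 2 + δ ^ 2 := by positivity
  have hform : (1 - x * (x * (x ^ 2 + δ ^ 2)⁻¹)) * x * (1 - x * (x * (x ^ 2 + δ ^ 2)⁻¹))
      = x * δ ^ 4 / (x ^ 2 + δ ^ 2) ^ 2 := by
    field_simp
    ring
  rw [hform, abs_div, abs_mul, abs_of_pos (by positivity : (0:ℝ) < (x ^ 2 + δ ^ 2) ^ 2),
    abs_of_pos (by positivity : (0:ℝ) < δ ^ 4), div_le_iff₀ (by positivity)]
  have h₁ : 2 * |x| * δ ≤ x ^ 2 + δ ^ 2 := by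
    nlinarith [sq_abs x, sq_nonneg (|x| - δ)]
  have h₂ : δ ^ 2 ≤ x ^ 2 + δ ^ 2 := by nlinarith [sq_nonneg x]
  nlinarith [mul_le_mul h₁ h₂ (by positivity) hD.le, abs_nonneg x]

theorem exists_norm_one_sub_mul_mul_le {A : Type*} [CStarAlgebra A] {h : A}
    (hh : IsSelfAdjoint h) {δ : ℝ} (hδ : 0 < δ) :
    ∃ c : A, IsSelfAdjoint (h * c) ∧ ‖(1 - h * c) * h * (1 - h * c)‖ ≤ δ := by
  let g : ℝ → ℝ := fun x => x * (x ^ 2 + δ ^ 2)⁻¹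
  have hg : Continuous g := continuous_id.mul <| ((continuous_pow 2).add continuous_const).inv₀
    fun x => (add_pos_of_nonneg_of_pos (sq_nonneg x) (pow_pos hδ 2)).ne'
  have hg₁ : Continuous fun x => 1 - x * g x := continuous_const.sub (continuous_id.mul hg)
  have hu : h * cfc g h = cfc (fun x => x * g x) h := by
    rw [cfc_mul (fun x : ℝ => x) g h continuous_id.continuousOn hg.continuousOn, cfc_id' ℝ h]
  refine ⟨cfc g h, hu ▸ cfc_predicate _ h, ?_⟩
  have hE : (1 - h * cfc g h) * h * (1 - h * cfc g h)
      = cfc (fun x => (1 - x * g x) * x * (1 - x * g x)) h := by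
    rw [hu, cfc_mul (fun x => (1 - x * g x) * x) (fun x => 1 - x * g x) h
        (hg₁.mul continuous_id).continuousOn hg₁.continuousOn,
      cfc_mul (fun x => 1 - x * g x) (fun x : ℝ => x) h hg₁.continuousOn
        continuous_id.continuousOn,
      cfc_sub (fun _ => (1 : ℝ)) (fun x => x * g x) h continuous_const.continuousOn
        (continuous_id.mul hg).continuousOn,
      cfc_const_one ℝ h, cfc_id' ℝ h]
  rw [hE]
  exact norm_cfc_le hδ.le fun x _ => abs_one_sub_mul_mul_le hδ x

namespace HilbertModule

variable {A : Type*} [CStarAlgebra A] {X : Type*} [NormedAddCommGroup X] [NormedSpace ℂ X]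
  [HilbertModule A X]

theorem inner_rsmul_left (x y : X) (a : A) :
    inner (A := A) (rsmul x a) y = star a * inner (A := A) x y := by
  rw [← star_inner, inner_rsmul_right, star_mul, star_inner]

theorem inner_sub_left (x y z : X) :
    inner (A := A) (x - y) z = inner (A := A) x z - inner (A := A) y z :=
  (AddMonoidHom.mk' (inner (A := A) · z) fun x y => inner_add_left x y z).map_sub x y

theorem inner_sub_right (x y z : X) :
    inner (A := A) x (y - z) = inner (A := A) x y - inner (A := A) x z :=
  (AddMonoidHom.mk' (inner (A := A) x) (inner_add_right x)).map_sub y z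

theorem inner_sub_rsmul_self (ξ : X) {u : A} (hu : IsSelfAdjoint u) :
    inner (A := A) (ξ - rsmul ξ u) (ξ - rsmul ξ u)
      = (1 - u) * inner (A := A) ξ ξ * (1 - u) := by
  simp only [inner_sub_left, inner_sub_right, inner_rsmul_left, inner_rsmul_right, hu.star_eq]
  noncomm_ring

theorem mem_idealSub_of_inner_self_mem {S : Set A} (hS : ∀ a ∈ S, ∀ b, a * b ∈ S) {ξ : X}
    (hξ : inner (A := A) ξ ξ ∈ S) : ξ ∈ idealSub X S := by
  refine Metric.mem_closure_iff.mpr fun ε hε => ?_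
  obtain ⟨c, hc, hnorm⟩ := exists_norm_one_sub_mul_mul_le (star_inner (A := A) ξ ξ)
    (half_pos (pow_pos hε 2))
  refine ⟨rsmul ξ (inner ξ ξ * c), subset_span ⟨ξ, _, hS _ hξ c, rfl⟩, ?_⟩
  have hsq : ‖ξ - rsmul ξ (inner ξ ξ * c)‖ ^ 2 < ε ^ 2 := by
    rw [norm_sq_inner (A := A), inner_sub_rsmul_self ξ hc]
    linarith [pow_pos hε 2]
  rw [dist_eq_norm]
  exact lt_of_pow_lt_pow_left₀ 2 hε.le hsq

end HilbertModule

namespace Correspondence.Rep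

open HilbertModule
open scoped CStarAlgebra

variable {A B : Type*} [CStarAlgebra A] [CStarAlgebra B] {X : Type*} [NormedAddCommGroup X]
  [NormedSpace ℂ X] [Correspondence A X] (π : A →⋆ₙₐ[ℂ] B) (t : X →ₗ[ℂ] B)

theorem norm_apply_le (ht₁ : ∀ ξ η : X, star (t ξ) * t η = π (inner (A := A) ξ η)) (ξ : X) :
    ‖t ξ‖ ≤ ‖ξ‖ := by
  have hsq : ‖t ξ‖ ^ 2 ≤ ‖ξ‖ ^ 2 := by
    calc ‖t ξ‖ ^ 2 = ‖π (inner (A := A) ξ ξ)‖ := by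
          rw [sq, ← CStarRing.norm_star_mul_self, ht₁]
      _ ≤ ‖inner (A := A) ξ ξ‖ := NonUnitalStarAlgHom.norm_apply_le π _
      _ = ‖ξ‖ ^ 2 := (norm_sq_inner ξ).symm
  exact pow_le_pow_iff_left₀ (norm_nonneg _) (norm_nonneg _) two_ne_zero |>.mp hsq

theorem continuous (ht₁ : ∀ ξ η : X, star (t ξ) * t η = π (inner (A := A) ξ η)) :
    Continuous t :=
  AddMonoidHomClass.continuous_of_bound t 1 fun ξ => by simpa using norm_apply_le π t ht₁ ξ

theorem apply_rsmul (ht₁ : ∀ ξ η : X, star (t ξ) * t η = π (inner (A := A) ξ η))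
    (ξ : X) (a : A) : t (rsmul ξ a) = t ξ * π a := by
  set d := t (rsmul ξ a) - t ξ * π a
  have hd : ∀ ζ : X, star (t ζ) * d = 0 := fun ζ => by
    rw [mul_sub, ht₁, ← mul_assoc, ht₁, inner_rsmul_right, map_mul, sub_self]
  have hdd : star d * d = 0 := by
    rw [star_sub, sub_mul, hd, star_mul, mul_assoc, hd, mul_zero, sub_zero]
  exact sub_eq_zero.mp ((CStarRing.star_mul_self_eq_zero_iff d).mp hdd)

theorem corrApply_ker_subset (ht₁ : ∀ ξ η : X, star (t ξ) * t η = π (inner (A := A) ξ η))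
    (ht₂ : ∀ (a : A) (ξ : X), π a * t ξ = t (lsmul a ξ)) :
    corrApply X {a : A | π a = 0} ⊆ {a : A | π a = 0} := by
  have h := mapsTo_closure_span (p := ⊥) (by simp) (fun x _ y _ => map_add π x y)
    (fun c x _ => map_smul π c x) (map_continuous π : Continuous π).continuousOn
    (R := {b : A | ∃ a ∈ {a : A | π a = 0}, ∃ ξ η : X, b = inner (A := A) η (lsmul a ξ)})
    (by
      rintro _ ⟨a, ha, ξ, η, rfl⟩
      rw [SetLike.mem_coe, Submodule.mem_bot ℂ, ← ht₁, ← ht₂, show π a = 0 from ha, zero_mul,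
        mul_zero])
  exact fun x hx => (Submodule.mem_bot ℂ).mp (h hx)

theorem ker_eq_idealSub (ht₁ : ∀ ξ η : X, star (t ξ) * t η = π (inner (A := A) ξ η)) :
    {ξ : X | t ξ = 0} = idealSub X {a : A | π a = 0} := by
  refine Set.Subset.antisymm (fun ξ hξ => ?_) fun ξ hξ => ?_
  · refine mem_idealSub_of_inner_self_mem (fun a ha b => ?_) ?_
    · show π (a * b) = 0
      rw [map_mul, show π a = 0 from ha, zero_mul]
    · show π (inner ξ ξ) = 0
      rw [← ht₁, show t ξ = 0 from hξ, star_zero, zero_mul]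
  · have h := mapsTo_closure_span (p := ⊥) (by simp) (fun x _ y _ => map_add t x y)
      (fun c x _ => map_smul t c x) (continuous π t ht₁).continuousOn
      (R := {x : X | ∃ (ζ : X) (a : A), a ∈ {a : A | π a = 0} ∧ x = rsmul ζ a})
      (by
        rintro _ ⟨ζ, a, ha, rfl⟩
        rw [SetLike.mem_coe, Submodule.mem_bot ℂ, apply_rsmul π t ht₁, show π a = 0 from ha,
          mul_zero])
    exact (Submodule.mem_bot ℂ).mp (h hξ)

theorem psi_mul_apply (ht₁ : ∀ ξ η : X, star (t ξ) * t η = π (inner (A := A) ξ η))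
    {ψ : (X →L[ℂ] X) → B} (hψθ : ∀ ξ η : X, ψ (rankOne A ξ η) = t ξ * star (t η))
    (hψadd : ∀ S T : X →L[ℂ] X, S ∈ compacts A X → T ∈ compacts A X →
      ψ (S + T) = ψ S + ψ T)
    (hψsmul : ∀ (c : ℂ) (S : X →L[ℂ] X), S ∈ compacts A X → ψ (c • S) = c • ψ S)
    (hψcont : ContinuousOn ψ (compacts A X)) {S : X →L[ℂ] X} (hS : S ∈ compacts A X)
    (ξ : X) : ψ S * t ξ = t (S ξ) := by
  have h := mapsTo_closure_span (p := ⊥) (f := fun S => ψ S * t ξ - t (S ξ)) (by simp)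
    (fun S hS T hT => by
      simp only [hψadd S T (subset_closure hS) (subset_closure hT), add_mul,
        add_apply, map_add]
      abel)
    (fun c S hS => by
      simp only [hψsmul c S (subset_closure hS), smul_mul_assoc,
        smul_apply, map_smul, smul_sub])
    ((hψcont.mul continuousOn_const).sub ((continuous π t ht₁).comp_continuousOn
      (ContinuousLinearMap.apply ℂ X ξ).continuous.continuousOn))
    (by
      rintro _ ⟨ζ, η, rfl⟩
      show ψ (rankOne A ζ η) * t ξ - t (rsmul ζ (inner η ξ)) = 0
      rw [hψθ, mul_assoc, ht₁]
      exact sub_eq_zero.mpr (apply_rsmul π t ht₁ ζ _).symm)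
    hS
  exact sub_eq_zero.mp ((Submodule.mem_bot ℂ).mp h)

theorem psi_mem_closure_span {ψ : (X →L[ℂ] X) → B}
    (hψθ : ∀ ξ η : X, ψ (rankOne A ξ η) = t ξ * star (t η))
    (hψadd : ∀ S T : X →L[ℂ] X, S ∈ compacts A X → T ∈ compacts A X →
      ψ (S + T) = ψ S + ψ T)
    (hψsmul : ∀ (c : ℂ) (S : X →L[ℂ] X), S ∈ compacts A X → ψ (c • S) = c • ψ S)
    (hψcont : ContinuousOn ψ (compacts A X)) {S : X →L[ℂ] X} (hS : S ∈ compacts A X) :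
    ψ S ∈ closure (span ℂ {b : B | ∃ ξ η : X, b = t ξ * star (t η)} : Set B) :=
  mapsTo_closure_span (Submodule.isClosed_topologicalClosure _)
    (fun S hS T hT => hψadd S T (subset_closure hS) (subset_closure hT))
    (fun c S hS => hψsmul c S (subset_closure hS)) hψcont
    (by
      rintro _ ⟨ξ, η, rfl⟩
      rw [hψθ]
      exact subset_closure (subset_span ⟨ξ, η, rfl⟩))
    hS

theorem eq_psi_lact_of_mem_image (ht₁ : ∀ ξ η : X, star (t ξ) * t η = π (inner (A := A) ξ η))
    (ht₂ : ∀ (a : A) (ξ : X), π a * t ξ = t (lsmul a ξ))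
    {ψ : (X →L[ℂ] X) → B} (hψθ : ∀ ξ η : X, ψ (rankOne A ξ η) = t ξ * star (t η))
    (hψadd : ∀ S T : X →L[ℂ] X, S ∈ compacts A X → T ∈ compacts A X →
      ψ (S + T) = ψ S + ψ T)
    (hψsmul : ∀ (c : ℂ) (S : X →L[ℂ] X), S ∈ compacts A X → ψ (c • S) = c • ψ S)
    (hψcont : ContinuousOn ψ (compacts A X)) {a : A} (ha : lact A (X := X) a ∈ compacts A X)
    {T : X →L[ℂ] X} (hT : T ∈ compacts A X) (hTa : ψ T = π a) :
    π a = ψ (lact A (X := X) a) := by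
  have hK : T - lact A a ∈ compacts A X :=
    (span ℂ {T : X →L[ℂ] X | ∃ ξ η : X, T = rankOne A ξ η}).topologicalClosure.sub_mem hT ha
  have hc : ∀ ξ : X, ψ (T - lact A a) * t ξ = 0 := fun ξ => by
    rw [psi_mul_apply π t ht₁ hψθ hψadd hψsmul hψcont hK, sub_apply, map_sub,
      ← psi_mul_apply π t ht₁ hψθ hψadd hψsmul hψcont hT, hTa, ht₂]
    exact sub_self _
  have hc₀ : ψ (T - lact A a) = 0 :=
    eq_zero_of_mem_closure_span_of_mul_eq_zero
      (by rintro _ ⟨ξ, η, rfl⟩; exact ⟨η, ξ, by rw [star_mul, star_star]⟩)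
      (psi_mem_closure_span t hψθ hψadd hψsmul hψcont hK)
      (by rintro _ ⟨ξ, η, rfl⟩; rw [← mul_assoc, hc, zero_mul])
  rw [← hTa, ← sub_add_cancel T (lact A a), hψadd _ _ hK ha, hc₀, zero_add]

end Correspondence.Rep

open HilbertModule Correspondence in
theorem stmt15_general {A B : Type*} [CStarAlgebra A] [CStarAlgebra B]
    {X : Type*} [NormedAddCommGroup X] [NormedSpace ℂ X] [Correspondence A X]
    (π : A →⋆ₙₐ[ℂ] B) (t : X →ₗ[ℂ] B)
    (ht₁ : ∀ ξ η : X, star (t ξ) * t η = π (inner (A := A) ξ η))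
    (ht₂ : ∀ (a : A) (ξ : X), π a * t ξ = t (lsmul a ξ))
    -- `ψ` agrees on `K(X)` with the canonical map `ψ_t`:
    (ψ : (X →L[ℂ] X) → B)
    (hψθ : ∀ ξ η : X, ψ (rankOne A ξ η) = t ξ * star (t η))
    (hψadd : ∀ S T : X →L[ℂ] X, S ∈ compacts A X → T ∈ compacts A X →
      ψ (S + T) = ψ S + ψ T)
    (hψsmul : ∀ (c : ℂ) (S : X →L[ℂ] X), S ∈ compacts A X → ψ (c • S) = c • ψ S)
    (hψcont : ContinuousOn ψ (compacts A X)) :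
    corrApply X {a : A | π a = 0} ⊆ {a : A | π a = 0} ∧
    {ξ : X | t ξ = 0} = idealSub X {a : A | π a = 0} ∧
    (∀ a : A, lact A (X := X) a ∈ compacts A X →
      (π a = ψ (lact A (X := X) a) ↔ π a ∈ ψ '' compacts A X)) := by
  refine ⟨Rep.corrApply_ker_subset π t ht₁ ht₂, Rep.ker_eq_idealSub π t ht₁,
    fun a ha => ⟨fun h => ⟨_, ha, h.symm⟩, ?_⟩⟩
  rintro ⟨T, hT, hTa⟩
  exact Rep.eq_psi_lact_of_mem_image π t ht₁ ht₂ hψθ hψadd hψsmul hψcont ha hT hTa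

open HilbertModule Correspondence in
/-- for a representation `(π, t)` of a C*-correspondence `X` on a
C*-algebra `B` (with `ψ = ψ_t` the induced map on compacts):
(i) `ker π` is positively invariant; (ii) `ker t = X·(ker π)`;
(iii) for `a` with `φ_X(a) ∈ K(X)`, `π(a) = ψ_t(φ_X(a))` iff `π(a) ∈ ψ_t(K(X))`. -/
theorem stmt15 {A B : Type*} [CStarAlgebra A] [CStarAlgebra B]
    {X : Type*} [NormedAddCommGroup X] [NormedSpace ℂ X] [Correspondence A X]
    [CompleteSpace X]
    (π : A →⋆ₙₐ[ℂ] B) (t : X →ₗ[ℂ] B)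
    (ht₁ : ∀ ξ η : X, star (t ξ) * t η = π (inner (A := A) ξ η))
    (ht₂ : ∀ (a : A) (ξ : X), π a * t ξ = t (lsmul a ξ))
    -- `ψ` agrees on `K(X)` with the canonical map `ψ_t`:
    (ψ : (X →L[ℂ] X) → B)
    (hψθ : ∀ ξ η : X, ψ (rankOne A ξ η) = t ξ * star (t η))
    (hψadd : ∀ S T : X →L[ℂ] X, S ∈ compacts A X → T ∈ compacts A X →
      ψ (S + T) = ψ S + ψ T)
    (hψsmul : ∀ (c : ℂ) (S : X →L[ℂ] X), S ∈ compacts A X → ψ (c • S) = c • ψ S)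
    (hψcont : ContinuousOn ψ (compacts A X)) :
    corrApply X {a : A | π a = 0} ⊆ {a : A | π a = 0} ∧
    {ξ : X | t ξ = 0} = idealSub X {a : A | π a = 0} ∧
    (∀ a : A, lact A (X := X) a ∈ compacts A X →
      (π a = ψ (lact A (X := X) a) ↔ π a ∈ ψ '' compacts A X)) :=
  stmt15_general π t ht₁ ht₂ ψ hψθ hψadd hψsmul hψcont
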